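/- arXiv:1403.8083 — 2 statements merged into one kernel-verified Lean document; each statement's English description precedes it below -/
import Mathlib

section
/- For any complex numbers x_1,…,x_{d+s} (d,s ∈ ℤ_{≥0}), one has 𝔉(x_1,…,x_d)𝔉(x_2,…,x_{d+s}) − 𝔉(x_1,…,x_{d+s})𝔉(x_2,…,x_d) = (∏_{j=1}^d x_j x_{j+1}) · 𝔉(x_{d+2},…,x_{d+s}). -/
open scoped BigOperators

/-- Admissible index tuples: k₁ ≥ 1 and k_{i+1} ≥ k_i + 2. -/
def FAdm (m : ℕ) (k : Fin m → ℕ) : Prop :=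
  (∀ i, 1 ≤ k i) ∧ ∀ i j : Fin m, (i : ℕ) + 1 = (j : ℕ) → k i + 2 ≤ k j

/-- The function 𝔉 given by the alternating multiple series
`𝔉(x) = 1 + ∑_{m≥1} (-1)^m ∑_{k₁≥1, k_{i+1}≥k_i+2} x_{k₁}x_{k₁+1}⋯x_{k_m}x_{k_m+1}`;
the sequence is indexed so that `x k` is `x_k` for `k ≥ 1`. -/
noncomputable def Fcal (x : ℕ → ℂ) : ℂ :=
  ∑' p : (Σ m : ℕ, { k : Fin m → ℕ // FAdm m k }),
    (-1 : ℂ) ^ p.1 * ∏ i, x (p.2.1 i) * x (p.2.1 i + 1)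

/-- 𝔉 of the finite sequence (x_1, …, x_n): x truncated after position n, padded by zeros. -/
noncomputable def FcalFin (n : ℕ) (x : ℕ → ℂ) : ℂ :=
  Fcal fun k => if k ≤ n then x k else 0

/-- 𝔉 of the finite segment (x_a, …, x_b); it equals 1 when the segment is empty (b = a-1)
and, by convention, 0 when b = a-2 (a segment of "length -1"). -/
noncomputable def Fseg (x : ℕ → ℂ) (a b : ℕ) : ℂ :=
  if b + 1 < a then 0 else FcalFin (b + 1 - a) (fun j => x (j + a - 1))

/-!
Splitting the index tuples of 𝔉 according to whether `k₁ = 1` gives the continuant recurrence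
`𝔉(x_a,…,x_b) = 𝔉(x_{a+1},…,x_b) - x_a x_{a+1} 𝔉(x_{a+2},…,x_b)`. The identity is proved with an
arbitrary first index `a` in place of `1`, by downward induction on `a`: expanding the two factors
`𝔉(x_a,…)` by the recurrence, the leading terms cancel and what remains is `x_a x_{a+1}` times the
identity at `a + 1`. The base case `a = d + 1` holds because `𝔉(x_{d+1},…,x_d) = 1` and the segment
`(x_{d+2},…,x_d)` of length `-1` has value `0`.
-/

open Finset

abbrev FIndex : Type := Σ m : ℕ, { k : Fin m → ℕ // FAdm m k }

def Fterm (y : ℕ → ℂ) (p : FIndex) : ℂ :=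
  (-1) ^ p.1 * ∏ i, y (p.2.1 i) * y (p.2.1 i + 1)

namespace FAdm

variable {m : ℕ} {k : Fin m → ℕ}

theorem add_two_mul_le (hk : FAdm m k) {i j : Fin m} {t : ℕ} (h : (i : ℕ) + t = j) :
    k i + 2 * t ≤ k j := by
  induction t generalizing j with
  | zero => obtain rfl : i = j := Fin.ext (by simpa using h); simp
  | succ t ih =>
    have hlt : (i : ℕ) + t < m := by omega
    have h1 := ih (j := ⟨i + t, hlt⟩) rfl
    have h2 := hk.2 ⟨i + t, hlt⟩ j (by simp only; omega)
    omega

theorem two_mul_add_one_le (hk : FAdm m k) (i : Fin m) : 2 * (i : ℕ) + 1 ≤ k i := by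
  have h0 : 0 < m := i.pos
  have := hk.add_two_mul_le (i := ⟨0, h0⟩) (j := i) (t := i) (by simp)
  have := hk.1 ⟨0, h0⟩
  omega

theorem add_const (hk : FAdm m k) (c : ℕ) : FAdm m fun i => k i + c :=
  ⟨fun i => by have := hk.1 i; dsimp only; omega,
    fun i j h => by have := hk.2 i j h; dsimp only; omega⟩

theorem sub_const (hk : FAdm m k) {c : ℕ} (hc : ∀ i, c < k i) : FAdm m fun i => k i - c :=
  ⟨fun i => by have := hc i; dsimp only; omega,
    fun i j h => by have := hk.2 i j h; have := hc i; dsimp only; omega⟩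

theorem cons {a : ℕ} (ha : 1 ≤ a) (hak : ∀ i, a + 2 ≤ k i) (hk : FAdm m k) :
    FAdm (m + 1) (Fin.cons a k : Fin (m + 1) → ℕ) := by
  refine ⟨Fin.cases ha hk.1, fun i j h => ?_⟩
  cases j using Fin.cases with
  | zero => simp at h
  | succ j =>
    cases i using Fin.cases with
    | zero => simpa using hak j
    | succ i => simpa using hk.2 i j (by simpa using h)

theorem tail {k : Fin (m + 1) → ℕ} (hk : FAdm (m + 1) k) : FAdm m fun i => k i.succ :=
  ⟨fun i => hk.1 _, fun i j h => hk.2 _ _ (by simpa using h)⟩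

end FAdm

theorem hasSum_Fterm {y : ℕ → ℂ} {n : ℕ} (hy : ∀ k, n < k → y k = 0) :
    HasSum (Fterm y) (Fcal y) := by
  classical
  -- a nonzero term has all its indices `≤ n`, hence also at most `n` of them
  refine (summable_of_ne_finset_zero (s := (range (n + 1)).sigma fun m =>
    (Fintype.piFinset fun _ : Fin m => range (n + 1)).subtype (FAdm m)) ?_).hasSum
  rintro ⟨m, k, hk⟩ hp
  obtain ⟨i, hi⟩ : ∃ i, n < k i := by
    by_contra! h
    have hm : m ≤ n := by
      by_contra! hm
      have h1 := hk.two_mul_add_one_le ⟨m - 1, by omega⟩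
      have h2 := h ⟨m - 1, by omega⟩
      simp only at h1
      omega
    simp [hm, h] at hp
  exact mul_eq_zero_of_right _ (prod_eq_zero (mem_univ i) (by simp [hy _ hi]))

namespace FIndex

theorem mk_congr {m : ℕ} {k k' : Fin m → ℕ} {hk : FAdm m k} {hk' : FAdm m k'} (h : k = k') :
    (⟨m, k, hk⟩ : FIndex) = ⟨m, k', hk'⟩ := by
  subst h; rfl

def shift (p : FIndex) : FIndex :=
  ⟨p.1, _, p.2.2.add_const 1⟩

def consOne (p : FIndex) : FIndex :=
  ⟨p.1 + 1, _, (p.2.2.add_const 2).cons le_rfl fun i => by have := p.2.2.1 i; omega⟩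

theorem Fterm_shift (y : ℕ → ℂ) (p : FIndex) :
    Fterm y p.shift = Fterm (fun k => y (k + 1)) p :=
  rfl

theorem Fterm_consOne (y : ℕ → ℂ) (p : FIndex) :
    Fterm y p.consOne = -(y 1 * y 2) * Fterm (fun k => y (k + 2)) p := by
  obtain ⟨m, k, hk⟩ := p
  unfold Fterm consOne
  dsimp only
  rw [Fin.prod_univ_succ]
  simp only [Fin.cons_zero, Fin.cons_succ, pow_succ]
  ring

theorem shift_injective : Function.Injective shift := by
  rintro ⟨m, k, hk⟩ ⟨m', k', hk'⟩ h
  obtain ⟨rfl, h⟩ := Sigma.mk.inj_iff.mp h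
  exact mk_congr (funext fun i => by simpa using congrFun (congrArg Subtype.val (eq_of_heq h)) i)

theorem consOne_injective : Function.Injective consOne := by
  rintro ⟨m, k, hk⟩ ⟨m', k', hk'⟩ h
  obtain ⟨hm, h⟩ := Sigma.mk.inj_iff.mp h
  obtain rfl : m = m' := by simpa using hm
  exact mk_congr (funext fun i => by
    simpa using congrFun (congrArg Subtype.val (eq_of_heq h)) i.succ)

theorem range_consOne : Set.range consOne = {p | 1 ∈ Set.range p.2.1} := by
  ext p
  refine ⟨by rintro ⟨q, rfl⟩; exact ⟨(0 : Fin (q.1 + 1)), rfl⟩, ?_⟩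
  obtain ⟨m, k, hk⟩ := p
  rintro ⟨(i : Fin m), (hi : k i = 1)⟩
  have hi0 : (i : ℕ) = 0 := by have := hk.two_mul_add_one_le i; omega
  obtain ⟨m, rfl⟩ : ∃ m', m = m' + 1 := ⟨m - 1, by omega⟩
  obtain rfl : i = 0 := Fin.ext hi0
  have h3 : ∀ j : Fin m, 2 < k j.succ := fun j => by
    have := hk.add_two_mul_le (i := 0) (j := j.succ) (t := j + 1) (by simp)
    omega
  refine ⟨⟨m, _, hk.tail.sub_const h3⟩, mk_congr (funext fun j => ?_)⟩
  cases j using Fin.cases with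
  | zero => exact hi.symm
  | succ j => have := h3 j; simp only [Fin.cons_succ]; omega

theorem range_shift : Set.range shift = {p | 1 ∈ Set.range p.2.1}ᶜ := by
  ext p
  refine ⟨?_, ?_⟩
  · rintro ⟨q, rfl⟩ ⟨i, hi : q.2.1 i + 1 = 1⟩
    have := q.2.2.1 i
    omega
  · obtain ⟨m, k, hk⟩ := p
    intro h1
    have h2 : ∀ i, 1 < k i := fun i => by
      have := hk.1 i
      have : k i ≠ 1 := fun h => h1 ⟨i, h⟩
      omega
    refine ⟨⟨m, _, hk.sub_const h2⟩, mk_congr (funext fun i => ?_)⟩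
    have := h2 i
    simp only
    omega

theorem isCompl_range_shift_range_consOne : IsCompl (Set.range shift) (Set.range consOne) := by
  rw [range_shift, range_consOne]
  exact isCompl_compl.symm

end FIndex

open FIndex in
theorem Fcal_eq_sub_mul {y : ℕ → ℂ} {n : ℕ} (hy : ∀ k, n < k → y k = 0) :
    Fcal y = Fcal (fun k => y (k + 1)) - y 1 * y 2 * Fcal (fun k => y (k + 2)) := by
  have h1 : HasSum (fun p : Set.range shift => Fterm y p) (Fcal fun k => y (k + 1)) := by
    refine shift_injective.hasSum_range_iff.mpr ?_
    simpa only [Function.comp_def, Fterm_shift] using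
      hasSum_Fterm (n := n) fun k hk => hy _ (by omega)
  have h2 : HasSum (fun p : Set.range consOne => Fterm y p)
      (-(y 1 * y 2) * Fcal fun k => y (k + 2)) := by
    refine consOne_injective.hasSum_range_iff.mpr ?_
    simp only [Function.comp_def, Fterm_consOne]
    exact (hasSum_Fterm (n := n) fun k hk => hy _ (by omega)).mul_left _
  rw [(hasSum_Fterm hy).unique (h1.add_isCompl isCompl_range_shift_range_consOne h2)]
  ring

theorem Fcal_eq_one {y : ℕ → ℂ} (hy : ∀ k, 2 ≤ k → y k = 0) : Fcal y = 1 := by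
  have hnil : FAdm 0 Fin.elim0 := ⟨fun i => i.elim0, fun i => i.elim0⟩
  rw [Fcal, tsum_eq_single (⟨0, Fin.elim0, hnil⟩ : FIndex)]
  · simp
  rintro ⟨_ | m, k, hk⟩ hne
  · exact absurd (FIndex.mk_congr (funext fun i => i.elim0)) hne
  · have := hk.1 0
    exact mul_eq_zero_of_right _
      (prod_eq_zero (mem_univ 0) (by rw [hy (k 0 + 1) (by omega), mul_zero]))

theorem FcalFin_eq_one {n : ℕ} (hn : n ≤ 1) (x : ℕ → ℂ) : FcalFin n x = 1 :=
  Fcal_eq_one fun _ hk => if_neg (by omega)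

theorem FcalFin_add_two (n : ℕ) (x : ℕ → ℂ) :
    FcalFin (n + 2) x
      = FcalFin (n + 1) (fun k => x (k + 1)) - x 1 * x 2 * FcalFin n (fun k => x (k + 2)) := by
  rw [FcalFin, Fcal_eq_sub_mul (n := n + 2) fun _ hk => if_neg (by omega), if_pos (by omega),
    if_pos (by omega)]
  unfold FcalFin
  congr 3 <;> funext k <;> split_ifs <;> first | rfl | omega

theorem Fseg_of_lt (x : ℕ → ℂ) {a b : ℕ} (h : b + 1 < a) : Fseg x a b = 0 :=
  if_pos h

theorem Fseg_eq_one (x : ℕ → ℂ) {a b : ℕ} (h₁ : a ≤ b + 1) (h₂ : b ≤ a) : Fseg x a b = 1 := by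
  rw [Fseg, if_neg (by omega)]
  exact FcalFin_eq_one (by omega) _

theorem Fseg_eq_sub_mul (x : ℕ → ℂ) {a b : ℕ} (h : a ≤ b) :
    Fseg x a b = Fseg x (a + 1) b - x a * x (a + 1) * Fseg x (a + 2) b := by
  rcases h.eq_or_lt with rfl | hlt
  · rw [Fseg_eq_one x (by omega) le_rfl, Fseg_eq_one x (by omega) (by omega),
      Fseg_of_lt x (by omega)]
    ring
  obtain ⟨n, hn⟩ : ∃ n, b + 1 - a = n + 2 := ⟨b - 1 - a, by omega⟩
  rw [Fseg, Fseg, Fseg, if_neg (by omega), if_neg (by omega), if_neg (by omega), hn,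
    show b + 1 - (a + 1) = n + 1 by omega, show b + 1 - (a + 2) = n by omega, FcalFin_add_two,
    show 1 + a - 1 = a by omega, show 2 + a - 1 = a + 1 by omega]
  congr 3 <;> funext k <;> congr 1 <;> omega

theorem Fseg_mul_sub_mul (x : ℕ → ℂ) {a d : ℕ} (s : ℕ) (h : a ≤ d + 1) :
    Fseg x a d * Fseg x (a + 1) (d + s) - Fseg x a (d + s) * Fseg x (a + 1) d
      = (∏ j ∈ Icc a d, x j * x (j + 1)) * Fseg x (d + 2) (d + s) := by
  induction h using Nat.decreasingInduction with
  | self =>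
    rw [Fseg_eq_one x le_rfl (by omega), Fseg_of_lt x (show d + 1 < d + 1 + 1 by omega),
      Icc_eq_empty (by omega)]
    ring
  | of_succ a ha ih =>
    rw [Fseg_eq_sub_mul x (show a ≤ d by omega), Fseg_eq_sub_mul x (show a ≤ d + s by omega),
      ← insert_Icc_add_one_left_eq_Icc (show a ≤ d by omega), prod_insert (by simp)]
    linear_combination x a * x (a + 1) * ih

/-- For any complex x₁,…,x_{d+s} :
𝔉(x₁,…,x_d) 𝔉(x₂,…,x_{d+s}) - 𝔉(x₁,…,x_{d+s}) 𝔉(x₂,…,x_d)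
  = (∏_{j=1}^d x_j x_{j+1}) 𝔉(x_{d+2},…,x_{d+s}). -/
theorem stmt_4 (x : ℕ → ℂ) (d s : ℕ) :
    Fseg x 1 d * Fseg x 2 (d + s) - Fseg x 1 (d + s) * Fseg x 2 d
      = (∏ j ∈ Finset.Icc 1 d, x j * x (j + 1)) * Fseg x (d + 2) (d + s) :=
  Fseg_mul_sub_mul x s (by omega)
end

section
/- For every ν ∉ −ℕ and every ρ ∈ ℂ, 𝔉({ρ/(ν+k)}_{k=1}^∞) = Γ(ν+1) ρ^{−ν} J_ν(2ρ), where J_ν is the Bessel function of the first kind. -/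
open scoped BigOperators

/-!
Since `x_k x_{k+1} = ρ² / ((ν + k)(ν + k + 1))`, the `m`-th layer of the series is `(-ρ²)^m` times
`∑_k ∏_i 1 / ((ν + k_i)(ν + k_i + 1))` over admissible `k`, and this sum is `1 / (m! (ν + 1)_m)`:
splitting off `k₁ = n + 1` reduces it to the sum of length `m - 1` at `ν + n + 2`, and the
remaining sum over `n` of `1 / (ν + n + 1)_{m + 1}` telescopes. Since
`Γ(ν + m + 1) = Γ(ν + 1) (ν + 1)_m`, this is the Bessel series. The multiple series converges
absolutely by comparison with the case `ν = 0`, where the layer sums are `1 / (m!)²`.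
-/

open Finset Filter Topology Polynomial Asymptotics
open scoped Nat

abbrev AdmTuple (m : ℕ) := {k : Fin m → ℕ // FAdm m k}

instance : Unique (AdmTuple 0) where
  default := ⟨Fin.elim0, fun i => i.elim0, fun i => i.elim0⟩
  uniq _ := Subtype.ext (funext fun i => i.elim0)

lemma FAdm.add_two_le_of_lt {m : ℕ} {k : Fin m → ℕ} (h : FAdm m k) {i j : Fin m} (hij : i < j) :
    k i + 2 ≤ k j := by
  obtain ⟨j, hj⟩ := j
  induction j with
  | zero => exact absurd (Fin.lt_def.mp hij) (Nat.not_lt_zero _)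
  | succ j ih =>
    have step := h.2 ⟨j, by omega⟩ ⟨j + 1, hj⟩ rfl
    rcases Nat.lt_succ_iff_lt_or_eq.mp (Fin.lt_def.mp hij) with hlt | heq
    · have := ih (by omega) hlt
      omega
    · rwa [show i = ⟨j, by omega⟩ from Fin.ext heq]

/-- Splitting off the first index: `(k₀, k₁, …) ↦ (k₀ - 1, (k₁ - k₀ - 1, k₂ - k₀ - 1, …))`. -/
def admSuccEquiv (m : ℕ) : AdmTuple (m + 1) ≃ ℕ × AdmTuple m where
  toFun p := (p.1 0 - 1, ⟨fun i => p.1 i.succ - (p.1 0 + 1),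
    fun i => by have := p.2.add_two_le_of_lt i.succ_pos; dsimp only; omega,
    fun i j hij => by
      have := p.2.add_two_le_of_lt i.succ_pos
      have := p.2.2 i.succ j.succ (by simpa using hij)
      dsimp only
      omega⟩)
  invFun q := ⟨Fin.cons (q.1 + 1) fun i => q.2.1 i + (q.1 + 2),
    Fin.cases (by simp) (fun i => by simp only [Fin.cons_succ]; omega), fun i j hij => by
      cases j using Fin.cases with
      | zero => simp at hij
      | succ j =>
        cases i using Fin.cases with
        | zero => have := q.2.2.1 j; simp only [Fin.cons_zero, Fin.cons_succ]; omega
        | succ i =>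
          have := q.2.2.2 i j (by simpa using hij)
          simp only [Fin.cons_succ]
          omega⟩
  left_inv p := by
    refine Subtype.ext (funext fun i => Fin.cases ?_ (fun i => ?_) i)
    · have := p.2.1 0
      simp only [Fin.cons_zero]
      omega
    · have := p.2.1 0
      have := p.2.add_two_le_of_lt i.succ_pos
      simp only [Fin.cons_succ]
      omega
  right_inv q := by
    ext <;> simp

lemma prod_admSuccEquiv_symm {M : Type*} [CommMonoid M] (g : ℕ → M) {m : ℕ} (n : ℕ)
    (p : AdmTuple m) :
    ∏ i, g (((admSuccEquiv m).symm (n, p)).1 i) = g (n + 1) * ∏ i, g (p.1 i + (n + 2)) := by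
  simp [admSuccEquiv, Fin.prod_univ_succ]

lemma summable_prod_admTuple {a : ℕ → ℝ} (ha0 : ∀ k, 0 ≤ a k) (ha : AntitoneOn a (Set.Ici 1))
    (hs : Summable a) (m : ℕ) : Summable fun p : AdmTuple m => ∏ i, a (p.1 i) := by
  induction m with
  | zero => exact (hasSum_unique _).summable
  | succ m ih =>
    rw [← (admSuccEquiv m).symm.summable_iff]
    refine Summable.of_nonneg_of_le (fun q => prod_nonneg fun i _ => ha0 _) (fun q => ?_)
      (((summable_nat_add_iff 1).mpr hs).mul_of_nonneg ih (fun n => ha0 _)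
        (fun p => prod_nonneg fun i _ => ha0 _))
    obtain ⟨n, p⟩ := q
    simp only [Function.comp_apply, prod_admSuccEquiv_symm]
    refine mul_le_mul_of_nonneg_left (prod_le_prod (fun i _ => ha0 _) fun i _ => ?_) (ha0 _)
    exact ha (p.2.1 i) (le_add_right (p.2.1 i)) (Nat.le_add_right _ _)

section RCLike

variable {𝕜 : Type*} [RCLike 𝕜]

/-- `x_k x_{k+1} = ρ² · pairInv ν k` for the sequence `x_k = ρ / (ν + k)`. -/
def pairInv (z : 𝕜) (k : ℕ) : 𝕜 := ((z + k) * (z + k + 1))⁻¹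

lemma pairInv_add_natCast (z : 𝕜) (k n : ℕ) : pairInv z (k + n) = pairInv (z + n) k := by
  simp only [pairInv]
  push_cast
  ring_nf

lemma pairInv_zero_nonneg (k : ℕ) : 0 ≤ pairInv (0 : ℝ) k := by
  unfold pairInv
  positivity

lemma antitoneOn_pairInv_zero : AntitoneOn (pairInv (0 : ℝ)) (Set.Ici 1) := by
  intro i hi j _ hij
  have hi : (1 : ℝ) ≤ i := by exact_mod_cast hi
  have hij : (i : ℝ) ≤ j := by exact_mod_cast hij
  unfold pairInv
  gcongr

lemma summable_pairInv_zero : Summable (pairInv (0 : ℝ)) := by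
  refine Summable.of_nonneg_of_le pairInv_zero_nonneg (fun k => ?_)
    (Real.summable_nat_pow_inv.mpr one_lt_two)
  rcases Nat.eq_zero_or_pos k with rfl | hk
  · simp [pairInv]
  · have hk : (1 : ℝ) ≤ k := by exact_mod_cast hk
    simp only [pairInv, zero_add]
    exact inv_anti₀ (by positivity) (by nlinarith)

lemma summable_prod_pairInv_zero (m : ℕ) :
    Summable fun p : AdmTuple m => ∏ i, pairInv (0 : ℝ) (p.1 i) :=
  summable_prod_admTuple pairInv_zero_nonneg antitoneOn_pairInv_zero summable_pairInv_zero m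

lemma exists_norm_inv_add_le (z : 𝕜) :
    ∃ C, ∀ n : ℕ, ‖(z + (n + 1))⁻¹‖ ≤ C * ((n : ℝ) + 1)⁻¹ := by
  have hO : (fun n : ℕ => (z + (n + 1))⁻¹) =O[cofinite] fun n => ((n : ℝ) + 1)⁻¹ := by
    rw [Nat.cofinite_eq_atTop]
    refine IsBigO.of_bound 2 ?_
    filter_upwards [eventually_ge_atTop ⌈2 * ‖z‖⌉₊] with n hn
    have hn : 2 * ‖z‖ ≤ n := Nat.ceil_le.mp hn
    have hlow : ((n : ℝ) + 1) / 2 ≤ ‖z + (n + 1)‖ := by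
      have := norm_sub_le (z + (n + 1)) z
      rw [add_sub_cancel_left] at this
      have hcast : ‖(n : 𝕜) + 1‖ = n + 1 := by
        exact_mod_cast RCLike.norm_natCast (K := 𝕜) (n + 1)
      linarith
    rw [norm_inv, Real.norm_of_nonneg (by positivity)]
    calc ‖z + (n + 1)‖⁻¹ ≤ (((n : ℝ) + 1) / 2)⁻¹ := inv_anti₀ (by positivity) hlow
      _ = 2 * ((n : ℝ) + 1)⁻¹ := by rw [inv_div, div_eq_mul_inv]
  obtain ⟨C, hC⟩ := (isBigO_cofinite_iff fun n hn => absurd hn (by positivity)).mp hO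
  exact ⟨C, fun n => (hC n).trans_eq (by rw [Real.norm_of_nonneg (by positivity)])⟩

lemma exists_norm_pairInv_le (z : 𝕜) :
    ∃ C, 0 ≤ C ∧ ∀ k, 1 ≤ k → ‖pairInv z k‖ ≤ C * pairInv (0 : ℝ) k := by
  obtain ⟨C, hC⟩ := exists_norm_inv_add_le z
  refine ⟨C ^ 2, sq_nonneg C, fun k hk => ?_⟩
  obtain ⟨n, rfl⟩ := Nat.exists_eq_add_of_le' hk
  have h1 := hC n
  have h2 := hC (n + 1)
  simp only [Nat.cast_add, Nat.cast_one, norm_inv] at h1 h2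
  simp only [pairInv, norm_inv, norm_mul, Nat.cast_add, Nat.cast_one, zero_add, mul_inv]
  calc ‖z + (n + 1)‖⁻¹ * ‖z + (n + 1) + 1‖⁻¹
      ≤ (C * ((n : ℝ) + 1)⁻¹) * (C * ((n : ℝ) + 1 + 1)⁻¹) :=
        mul_le_mul h1 (by simpa only [add_assoc] using h2) (by positivity)
          ((inv_nonneg.mpr (norm_nonneg _)).trans h1)
    _ = C ^ 2 * (((n : ℝ) + 1)⁻¹ * ((n : ℝ) + 1 + 1)⁻¹) := by ring

lemma exists_norm_prod_pairInv_le (z : 𝕜) :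
    ∃ C, 0 ≤ C ∧ ∀ m (p : AdmTuple m),
      ‖∏ i, pairInv z (p.1 i)‖ ≤ C ^ m * ∏ i, pairInv (0 : ℝ) (p.1 i) := by
  obtain ⟨C, hC0, hC⟩ := exists_norm_pairInv_le z
  refine ⟨C, hC0, fun m p => ?_⟩
  calc ‖∏ i, pairInv z (p.1 i)‖ = ∏ i, ‖pairInv z (p.1 i)‖ := norm_prod _ _
    _ ≤ ∏ i, C * pairInv (0 : ℝ) (p.1 i) :=
        prod_le_prod (fun _ _ => norm_nonneg _) fun i _ => hC _ (p.2.1 i)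
    _ = C ^ m * ∏ i, pairInv (0 : ℝ) (p.1 i) := by simp [prod_mul_distrib]

lemma summable_prod_pairInv (z : 𝕜) (m : ℕ) :
    Summable fun p : AdmTuple m => ∏ i, pairInv z (p.1 i) := by
  obtain ⟨C, -, hC⟩ := exists_norm_prod_pairInv_le z
  exact Summable.of_norm_bounded ((summable_prod_pairInv_zero m).mul_left (C ^ m)) (hC m)

lemma ascPochhammer_eval_add_two {S : Type*} [CommSemiring S] (m : ℕ) (y : S) :
    (ascPochhammer S (m + 2)).eval y = y * (y + 1) * (ascPochhammer S m).eval (y + 2) := by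
  simp only [ascPochhammer_succ_left, eval_mul, eval_X, eval_comp, eval_add, eval_one]
  ring_nf

lemma ascPochhammer_eval_ne_zero {y : 𝕜} (hy : ∀ n : ℕ, y + n ≠ 0) (M : ℕ) :
    (ascPochhammer 𝕜 M).eval y ≠ 0 := by
  rw [Ne, ascPochhammer_eval_eq_zero_iff]
  rintro ⟨k, -, hk⟩
  exact hy k (by rw [hk]; ring)

lemma tendsto_inv_ascPochhammer_eval_add_natCast (y : 𝕜) {M : ℕ} (hM : M ≠ 0) :
    Tendsto (fun n : ℕ => ((ascPochhammer 𝕜 M).eval (y + n))⁻¹) atTop (𝓝 0) := by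
  have hy : Tendsto (fun n : ℕ => ‖y + n‖) atTop atTop :=
    tendsto_norm_cobounded_atTop.comp
      ((tendsto_const_add_cobounded y).comp tendsto_natCast_atTop_cobounded)
  have hdeg : 0 < (ascPochhammer 𝕜 M).degree :=
    natDegree_pos_iff_degree_pos.mp (by rw [ascPochhammer_natDegree]; omega)
  rw [tendsto_zero_iff_norm_tendsto_zero]
  simpa only [norm_inv, Function.comp_def] using
    tendsto_inv_atTop_zero.comp ((ascPochhammer 𝕜 M).tendsto_norm_atTop hdeg hy)

/-- Telescoping: `M / (y)_{M+1} = 1 / (y)_M - 1 / (y + 1)_M`. -/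
lemma tendsto_sum_range_inv_ascPochhammer {y : 𝕜} (hy : ∀ n : ℕ, y + n ≠ 0) {M : ℕ}
    (hM : M ≠ 0) :
    Tendsto (fun N => ∑ n ∈ range N, ((ascPochhammer 𝕜 (M + 1)).eval (y + n))⁻¹) atTop
      (𝓝 ((M * (ascPochhammer 𝕜 M).eval y)⁻¹)) := by
  set F : ℕ → 𝕜 := fun n => (M * (ascPochhammer 𝕜 M).eval (y + n))⁻¹
  have hshift (n : ℕ) : ∀ j : ℕ, y + n + j ≠ 0 := fun j => by
    simpa [add_assoc] using hy (n + j)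
  have hdiff (n : ℕ) : ((ascPochhammer 𝕜 (M + 1)).eval (y + n))⁻¹ = F n - F (n + 1) := by
    have hA := ascPochhammer_eval_ne_zero (hshift n) M
    have hB := ascPochhammer_eval_ne_zero (hshift (n + 1)) M
    have h1 := ascPochhammer_succ_eval M (y + n)
    have h2 : (ascPochhammer 𝕜 (M + 1)).eval (y + n)
        = (y + n) * (ascPochhammer 𝕜 M).eval (y + (n + 1 : ℕ)) := by
      simp [ascPochhammer_succ_left, eval_comp, add_assoc]
    have hM' : (M : 𝕜) ≠ 0 := Nat.cast_ne_zero.mpr hM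
    simp only [F]
    rw [h1] at h2 ⊢
    have hQ : y + n + M ≠ 0 := hshift n M
    field_simp
    linear_combination h2
  have hF : Tendsto F atTop (𝓝 0) := by
    have := (tendsto_inv_ascPochhammer_eval_add_natCast y hM).const_mul ((M : 𝕜)⁻¹)
    rw [mul_zero] at this
    exact this.congr fun n => (mul_inv _ _).symm
  simp_rw [hdiff, sum_range_sub']
  simpa [F] using tendsto_const_nhds.sub hF

theorem hasSum_prod_pairInv (m : ℕ) {z : 𝕜} (hz : ∀ n : ℕ, z + (n + 1) ≠ 0) :
    HasSum (fun p : AdmTuple m => ∏ i, pairInv z (p.1 i))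
      ((m ! * (ascPochhammer 𝕜 m).eval (z + 1))⁻¹) := by
  induction m generalizing z with
  | zero => simp
  | succ m ih =>
    set G := (fun p : AdmTuple (m + 1) => ∏ i, pairInv z (p.1 i)) ∘ (admSuccEquiv m).symm
    have hG : Summable G := (admSuccEquiv m).symm.summable_iff.mpr (summable_prod_pairInv z _)
    have hfiber (n : ℕ) : HasSum (fun p => G (n, p))
        ((m ! : 𝕜)⁻¹ * ((ascPochhammer 𝕜 (m + 2)).eval (z + 1 + n))⁻¹) := by
      have hz' : ∀ j : ℕ, z + (n + 2 : ℕ) + (j + 1) ≠ 0 := fun j => by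
        convert hz (n + j + 2) using 1
        push_cast
        ring
      have hval : ((m ! : 𝕜))⁻¹ * ((ascPochhammer 𝕜 (m + 2)).eval (z + 1 + n))⁻¹
          = pairInv z (n + 1) * (m ! * (ascPochhammer 𝕜 m).eval (z + (n + 2 : ℕ) + 1))⁻¹ := by
        rw [ascPochhammer_eval_add_two]
        simp only [pairInv, mul_inv]
        push_cast
        ring_nf
      simp only [G, Function.comp_apply, prod_admSuccEquiv_symm, pairInv_add_natCast, hval]
      exact (ih hz').mul_left _
    have hsum := hG.hasSum.prod_fiberwise hfiber
    have hy : ∀ n : ℕ, z + 1 + n ≠ 0 := fun n => by rw [add_assoc, add_comm 1]; exact hz n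
    have htel := (hsum.summable.hasSum_iff_tendsto_nat).mpr
      ((tendsto_sum_range_inv_ascPochhammer hy (Nat.add_one_ne_zero m)).const_mul (m ! : 𝕜)⁻¹
        |>.congr fun N => by rw [mul_sum])
    rw [← (admSuccEquiv m).symm.hasSum_iff]
    convert hG.hasSum using 1
    rw [hsum.unique htel, Nat.factorial_succ]
    push_cast
    simp only [mul_inv]
    ring

lemma summable_sigma_pow_mul_prod_pairInv (w z : 𝕜) :
    Summable fun p : Σ m, AdmTuple m => w ^ p.1 * ∏ i, pairInv z (p.2.1 i) := by
  obtain ⟨C, hC0, hC⟩ := exists_norm_prod_pairInv_le z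
  set c := ‖w‖ * C
  let g : (Σ m, AdmTuple m) → ℝ := fun p => c ^ p.1 * ∏ i, pairInv (0 : ℝ) (p.2.1 i)
  have hg0 (p : Σ m, AdmTuple m) : 0 ≤ g p :=
    mul_nonneg (by positivity) (prod_nonneg fun i _ => pairInv_zero_nonneg _)
  have hg : Summable g := by
    refine (summable_sigma_of_nonneg (f := g) hg0).mpr
      ⟨fun m => (summable_prod_pairInv_zero m).mul_left (c ^ m), ?_⟩
    refine Summable.of_nonneg_of_le (fun m => tsum_nonneg fun p => hg0 ⟨m, p⟩) (fun m => ?_)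
      (Real.summable_pow_div_factorial c)
    have hzero : ∀ n : ℕ, (0 : ℝ) + (n + 1) ≠ 0 := fun n => by positivity
    calc ∑' p, g ⟨m, p⟩ = ∑' p : AdmTuple m, c ^ m * ∏ i, pairInv (0 : ℝ) (p.1 i) := rfl
      _ = c ^ m * (m ! * m ! : ℝ)⁻¹ := by
          rw [tsum_mul_left, (hasSum_prod_pairInv m hzero).tsum_eq, zero_add,
            ascPochhammer_eval_one]
      _ ≤ c ^ m / m ! := by
          rw [div_eq_mul_inv]
          gcongr
          exact le_mul_of_one_le_left (by positivity) (by exact_mod_cast m.factorial_pos)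
  refine Summable.of_norm_bounded hg fun p => ?_
  calc ‖w ^ p.1 * ∏ i, pairInv z (p.2.1 i)‖
      ≤ ‖w‖ ^ p.1 * (C ^ p.1 * ∏ i, pairInv (0 : ℝ) (p.2.1 i)) := by
        rw [norm_mul, norm_pow]
        exact mul_le_mul_of_nonneg_left (hC _ _) (by positivity)
    _ = g p := by simp only [g, c, mul_pow, mul_assoc]

lemma neg_one_pow_mul_prod_div_mul_div (ρ z : 𝕜) {m : ℕ} (k : Fin m → ℕ) :
    (-1) ^ m * ∏ i, ρ / (z + k i) * (ρ / (z + (k i + 1 : ℕ)))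
      = (-ρ ^ 2) ^ m * ∏ i, pairInv z (k i) := by
  have hfactor (i : Fin m) :
      ρ / (z + k i) * (ρ / (z + (k i + 1 : ℕ))) = ρ ^ 2 * pairInv z (k i) := by
    simp only [pairInv, mul_inv]
    push_cast
    ring
  simp only [hfactor, prod_mul_distrib, prod_const, card_univ, Fintype.card_fin]
  rw [neg_pow]
  ring

end RCLike

/-- 𝔉({ρ/(ν+k)}_{k=1}^∞) = Γ(ν+1) ρ^{-ν} J_ν(2ρ), the right-hand side written as the
entire function of ρ: ∑_{m≥0} (-1)^m Γ(ν+1) ρ^{2m}/(m! Γ(ν+m+1)). -/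
theorem stmt_10 (ν : ℂ) (hν : ∀ m : ℕ, ν + ((m : ℂ) + 1) ≠ 0) (ρ : ℂ) :
    Fcal (fun k => ρ / (ν + (k : ℂ))) =
      ∑' m : ℕ, (-1 : ℂ) ^ m * Complex.Gamma (ν + 1) * ρ ^ (2 * m) /
        ((Nat.factorial m : ℂ) * Complex.Gamma (ν + (m : ℂ) + 1)) := by
  have hν' : ∀ k : ℕ, ν + 1 ≠ -k := fun k h =>
    hν k (by rw [← add_assoc, add_right_comm, h]; ring)
  have hΓ (m : ℕ) : Complex.Gamma (ν + m + 1)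
      = Complex.Gamma (ν + 1) * (ascPochhammer ℂ m).eval (ν + 1) := by
    rw [← Complex.Gamma_add_nat_div_Gamma_eq _ hν', mul_div_cancel₀ _ (Complex.Gamma_ne_zero hν'),
      add_right_comm]
  unfold Fcal
  simp_rw [neg_one_pow_mul_prod_div_mul_div]
  rw [(summable_sigma_pow_mul_prod_pairInv _ ν).tsum_sigma]
  refine tsum_congr fun m => ?_
  dsimp only
  rw [tsum_mul_left, (hasSum_prod_pairInv m hν).tsum_eq, hΓ, neg_pow, pow_mul]
  field_simp [Complex.Gamma_ne_zero hν']
end
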